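/- The matrix e = diag(2, −1, −1) is an Okubo idempotent of norm one that unitalizes the algebra: e * e = e, n(e) = 1, and for every 3×3 complex matrix x with xᴴ = x and trace x = 0 one has (e * x) * e = x and e * (x * e) = x; consequently the product x · y = (e * x) * (y * e) has e as a two-sided unit. -/
import Mathlib

noncomputable section

open Matrix

/-- `μ = (3 + i√3)/6`. -/
def okMu : ℂ := (3 + Complex.I * Real.sqrt 3) / 6

/-- The matrix Okubo product
`x * y = μ·(xy) + (conj μ)·(yx) − (1/3)(trace(xy))·1` on 3×3 complex matrices. -/
def okmulM (x y : Matrix (Fin 3) (Fin 3) ℂ) : Matrix (Fin 3) (Fin 3) ℂ :=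
  okMu • (x * y) + (starRingEnd ℂ okMu) • (y * x) -
    ((1 / 3 : ℂ) * Matrix.trace (x * y)) • (1 : Matrix (Fin 3) (Fin 3) ℂ)

/-- The matrix Okubo norm `n(z) = (1/6)·trace(z z)`. -/
def nM (z : Matrix (Fin 3) (Fin 3) ℂ) : ℂ := (1 / 6 : ℂ) * Matrix.trace (z * z)

/-- The idempotent `e = diag(2, −1, −1)`. -/
def eIdem : Matrix (Fin 3) (Fin 3) ℂ := Matrix.diagonal ![2, -1, -1]

/-- The unitalized product `x · y = (e * x) * (y * e)`. -/
def cdot (x y : Matrix (Fin 3) (Fin 3) ℂ) : Matrix (Fin 3) (Fin 3) ℂ :=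
  okmulM (okmulM eIdem x) (okmulM y eIdem)

lemma okMu_conj : (starRingEnd ℂ) okMu = 1 - okMu := by
  simp [okMu, map_div₀, map_add, _root_.map_mul, Complex.conj_I, Complex.conj_ofReal, map_ofNat]
  ring

lemma okMu_sq : okMu ^ 2 = okMu - 1/3 := by
  have hs : ((Real.sqrt 3 : ℝ):ℂ)^2 = 3 := by
    rw [← Complex.ofReal_pow, Real.sq_sqrt] <;> norm_num
  have hI := Complex.I_sq
  rw [okMu]
  linear_combination (((Real.sqrt 3:ℝ):ℂ)^2/36) * hI + (-1/36 : ℂ)*hs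

lemma he2 : eIdem * eIdem = eIdem + (2:ℂ) • 1 := by
  ext i j
  fin_cases i <;> fin_cases j <;>
    simp [eIdem, Matrix.mul_apply, Fin.sum_univ_three, Matrix.one_apply] <;> norm_num

lemma htre : Matrix.trace eIdem = 0 := by
  simp [eIdem, Matrix.trace, Fin.sum_univ_three]; norm_num

lemma htre2 : Matrix.trace (eIdem * eIdem) = 6 := by
  rw [he2, Matrix.trace_add, Matrix.trace_smul, htre, Matrix.trace_one]
  norm_num

lemma keylem (x : Matrix (Fin 3) (Fin 3) ℂ) (hx : Matrix.trace x = 0) :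
    eIdem * x * eIdem + eIdem * x + x * eIdem + x
      = Matrix.trace (eIdem * x) • (eIdem + 1) := by
  have hx' : x 0 0 + x 1 1 + x 2 2 = 0 := by
    simpa [Matrix.trace, Fin.sum_univ_three] using hx
  ext i j
  fin_cases i <;> fin_cases j <;>
    simp [eIdem, Matrix.mul_apply, Matrix.trace, Fin.sum_univ_three, Matrix.one_apply]
  linear_combination (3:ℂ) * hx'

lemma hEsub (x : Matrix (Fin 3) (Fin 3) ℂ) (hx : Matrix.trace x = 0) :
    eIdem * x * eIdem
      = Matrix.trace (eIdem * x) • (eIdem + 1) - eIdem * x - x * eIdem - x := by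
  rw [← keylem x hx]; abel

lemma hxe2 (x : Matrix (Fin 3) (Fin 3) ℂ) :
    x * eIdem * eIdem = x * eIdem + (2:ℂ) • x := by
  rw [Matrix.mul_assoc, he2, Matrix.mul_add, mul_smul_comm, Matrix.mul_one]

lemma he2x (x : Matrix (Fin 3) (Fin 3) ℂ) :
    eIdem * (eIdem * x) = eIdem * x + (2:ℂ) • x := by
  rw [← Matrix.mul_assoc, he2, Matrix.add_mul, smul_mul_assoc, Matrix.one_mul]

lemma he2x' (x : Matrix (Fin 3) (Fin 3) ℂ) :
    eIdem * eIdem * x = eIdem * x + (2:ℂ) • x := by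
  rw [he2, Matrix.add_mul, smul_mul_assoc, Matrix.one_mul]

lemma htr_exe (x : Matrix (Fin 3) (Fin 3) ℂ) (hx : Matrix.trace x = 0) :
    Matrix.trace (eIdem * x * eIdem) = Matrix.trace (eIdem * x) := by
  rw [Matrix.trace_mul_comm, he2x, Matrix.trace_add, Matrix.trace_smul, hx]
  simp

lemma htr_xe (x : Matrix (Fin 3) (Fin 3) ℂ) :
    Matrix.trace (x * eIdem) = Matrix.trace (eIdem * x) :=
  Matrix.trace_mul_comm x eIdem

lemma htr_exe' (x : Matrix (Fin 3) (Fin 3) ℂ) (hx : Matrix.trace x = 0) :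
    Matrix.trace (eIdem * (x * eIdem)) = Matrix.trace (eIdem * x) := by
  rw [← Matrix.mul_assoc]; exact htr_exe x hx

lemma htr_xee (x : Matrix (Fin 3) (Fin 3) ℂ) (hx : Matrix.trace x = 0) :
    Matrix.trace (x * eIdem * eIdem) = Matrix.trace (eIdem * x) := by
  rw [hxe2, Matrix.trace_add, Matrix.trace_smul, hx, htr_xe]
  simp

/-- left absorption : (e*x)*e = x -/
lemma left_abs (x : Matrix (Fin 3) (Fin 3) ℂ) (hx : Matrix.trace x = 0) :
    okmulM (okmulM eIdem x) eIdem = x := by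
  have hm2 := okMu_sq
  simp only [okmulM, okMu_conj]
  simp only [Matrix.add_mul, Matrix.sub_mul, Matrix.mul_add, Matrix.mul_sub,
    smul_mul_assoc, mul_smul_comm, Matrix.one_mul, Matrix.mul_one,
    Matrix.trace_add, Matrix.trace_sub, Matrix.trace_smul, Matrix.trace_one]
  simp only [← Matrix.mul_assoc]
  rw [hxe2, he2x']
  simp only [Matrix.trace_add, Matrix.trace_sub, Matrix.trace_smul, hx, htr_xe,
    htr_exe x hx, htre, smul_eq_mul, smul_zero, mul_zero, zero_smul,
    add_zero, sub_zero]
  rw [hEsub x hx]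
  match_scalars <;>
    first
      | ring1
      | linear_combination (-3:ℂ) * hm2
      | linear_combination (3:ℂ) * hm2
      | linear_combination (-6:ℂ) * hm2
      | linear_combination (6:ℂ) * hm2
      | linear_combination (2 * Matrix.trace (eIdem * x)) * hm2

/-- right absorption : e*(x*e) = x -/
lemma right_abs (x : Matrix (Fin 3) (Fin 3) ℂ) (hx : Matrix.trace x = 0) :
    okmulM eIdem (okmulM x eIdem) = x := by
  have hm2 := okMu_sq
  simp only [okmulM, okMu_conj]
  simp only [Matrix.add_mul, Matrix.sub_mul, Matrix.mul_add, Matrix.mul_sub,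
    smul_mul_assoc, mul_smul_comm, Matrix.one_mul, Matrix.mul_one,
    Matrix.trace_add, Matrix.trace_sub, Matrix.trace_smul, Matrix.trace_one]
  simp only [← Matrix.mul_assoc]
  rw [hxe2, he2x']
  simp only [Matrix.trace_add, Matrix.trace_sub, Matrix.trace_smul, hx, htr_xe,
    htr_exe x hx, htre, smul_eq_mul, smul_zero, mul_zero, zero_smul,
    add_zero, sub_zero]
  rw [hEsub x hx]
  match_scalars <;>
    first
      | ring1
      | linear_combination (-3:ℂ) * hm2
      | linear_combination (3:ℂ) * hm2
      | linear_combination (-6:ℂ) * hm2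
      | linear_combination (6:ℂ) * hm2
      | linear_combination (2 * Matrix.trace (eIdem * x)) * hm2

lemma ee_eq : okmulM eIdem eIdem = eIdem := by
  simp only [okmulM]
  rw [htre2, he2, okMu_conj]
  match_scalars <;> ring

/-- `e = diag(2,−1,−1)` is an Okubo idempotent of norm one which
unitalizes the algebra: `e*e = e`, `n(e) = 1`, `(e*x)*e = x`, `e*(x*e) = x`, and
`e` is a two-sided unit for the product `x · y = (e*x)*(y*e)`. -/
theorem okubo_matrix_idempotent_unitalizes :
    okmulM eIdem eIdem = eIdem ∧ nM eIdem = 1 ∧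
    (∀ x : Matrix (Fin 3) (Fin 3) ℂ, xᴴ = x → Matrix.trace x = 0 →
      okmulM (okmulM eIdem x) eIdem = x ∧
      okmulM eIdem (okmulM x eIdem) = x ∧
      cdot eIdem x = x ∧ cdot x eIdem = x) := by
  refine ⟨ee_eq, ?_, ?_⟩
  · rw [nM, htre2]; norm_num
  · intro x _ hx
    refine ⟨left_abs x hx, right_abs x hx, ?_, ?_⟩
    · rw [cdot, ee_eq]; exact right_abs x hx
    · rw [cdot, ee_eq]; exact left_abs x hx

end
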